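/- arXiv:2605.09821 — 5 statements merged into one kernel-verified Lean document; each statement's English description precedes it below -/
import Mathlib

section
/- Let (M, D) be a Steiner forest instance and run the clustering procedure on it, producing clusterings 𝒞_0, …, 𝒞_{L+1}. Then for every 0 ≤ i ≤ L+1 and any two distinct i-active clusters C_1, C_2 ∈ 𝒞_i, one has dist_{M/𝒞_i}(C_1, C_2) ≥ 2^i. -/
open Finset
structure SFI (n : ℕ) where
  dist : Fin n × Bool → Fin n × Bool → ℝ
  dist_self : ∀ x, dist x x = 0
  dist_symm : ∀ x y, dist x y = dist y x
  dist_triangle : ∀ x y z, dist x z ≤ dist x y + dist y z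
  one_le_dist : ∀ x y, x ≠ y → 1 ≤ dist x y

namespace SFI

/-- Terminals. -/
abbrev Pt (n : ℕ) := Fin n × Bool

variable {n : ℕ}

/-- The mate of a terminal. -/
def mate (v : Pt n) : Pt n := (v.1, !v.2)

/-- `level v = ⌈log₂ dist(v, mate v)⌉`. -/
noncomputable def level (M : SFI n) (v : Pt n) : ℕ :=
  ⌈Real.logb 2 (M.dist v (mate v))⌉₊

/-- The level of a cluster: maximum level of its terminals. -/
noncomputable def clLevel (M : SFI n) (C : Set (Pt n)) : ℕ := sSup (M.level '' C)

/-- A cluster is `i`-active if its level is at least `i`. -/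
def Active (M : SFI n) (i : ℕ) (C : Set (Pt n)) : Prop := i ≤ M.clLevel C

/-- `L`, the maximum level of a terminal. -/
noncomputable def maxLevel (M : SFI n) : ℕ := sSup (Set.range M.level)

/-- The contracted metric `M/𝒞`: the distance between clusters `C, C'` is the minimum over
sequences of clusters `C = Q_0, …, Q_k = C'` and points `x_j ∈ Q_{j-1}`, `y_j ∈ Q_j`
of `∑ dist (x j) (y j)`. -/
noncomputable def cDist (M : SFI n) (𝒞 : Set (Set (Pt n))) (C C' : Set (Pt n)) : ℝ :=
  sInf {s | ∃ (k : ℕ) (Q : Fin (k+1) → Set (Pt n)) (x y : Fin k → Pt n),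
    (∀ j, Q j ∈ 𝒞) ∧ Q 0 = C ∧ Q (Fin.last k) = C' ∧
    (∀ j : Fin k, x j ∈ Q j.castSucc ∧ y j ∈ Q j.succ) ∧
    s = ∑ j, M.dist (x j) (y j)}

/-- Adjacency of the virtual graph `H_i` on a clustering `𝒞`: two distinct `i`-active
clusters of `𝒞` are adjacent iff their distance in `M/𝒞` is `< 2^(i+1)`
(the distance is symmetric; both directions are recorded to make symmetry definitional). -/
def hRel (M : SFI n) (𝒞 : Set (Set (Pt n))) (i : ℕ) (C₁ C₂ : Set (Pt n)) : Prop :=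
  C₁ ∈ 𝒞 ∧ C₂ ∈ 𝒞 ∧ C₁ ≠ C₂ ∧ M.Active i C₁ ∧ M.Active i C₂ ∧
    M.cDist 𝒞 C₁ C₂ < 2 ^ (i+1) ∧ M.cDist 𝒞 C₂ C₁ < 2 ^ (i+1)

/-- One step of the clustering procedure: keep the `i`-inactive clusters, and merge each
connected component of the virtual graph `H_i` into a single cluster. -/
def step (M : SFI n) (𝒞 : Set (Set (Pt n))) (i : ℕ) : Set (Set (Pt n)) :=
  {C | C ∈ 𝒞 ∧ ¬ M.Active i C} ∪
  {D | ∃ C, C ∈ 𝒞 ∧ M.Active i C ∧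
    D = ⋃₀ {C' | Relation.ReflTransGen (M.hRel 𝒞 i) C C'}}

/-- The clustering hierarchy of the instance restricted to the terminal set `S`:
`𝒞_0` is the trivial clustering of `S`; `𝒞_{i+1}` is obtained from `𝒞_i` by merging the
connected components of `H_i`. (For `i` beyond the top level this is constant.) -/
def clusterings (M : SFI n) (S : Set (Pt n)) : ℕ → Set (Set (Pt n))
  | 0 => {C | ∃ v ∈ S, C = {v}}
  | (i+1) => M.step (M.clusterings S i) i

/-- The virtual graph `H_i` as a simple graph on clusters. -/
def virtG (M : SFI n) (S : Set (Pt n)) (i : ℕ) : SimpleGraph (Set (Pt n)) where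
  Adj C₁ C₂ := M.hRel (M.clusterings S i) i C₁ C₂
  symm := by
    constructor
    rintro C₁ C₂ ⟨h1, h2, h3, h4, h5, h6, h7⟩
    exact ⟨h2, h1, h3.symm, h5, h4, h7, h6⟩
  loopless := by
    constructor
    rintro C ⟨h1, h2, h3, _⟩
    exact h3 rfl

/-- Cost of an edge of the complete graph on the terminals. -/
noncomputable def ecost (M : SFI n) (e : Sym2 (Pt n)) : ℝ :=
  Sym2.lift ⟨M.dist, M.dist_symm⟩ e

/-- Cost of a set of edges. -/
noncomputable def cost (M : SFI n) (F : Finset (Sym2 (Pt n))) : ℝ := ∑ e ∈ F, M.ecost e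

/-- A set of edges is feasible if every demand pair is connected by it. -/
def Feasible (M : SFI n) (F : Finset (Sym2 (Pt n))) : Prop :=
  ∀ i : Fin n,
    (SimpleGraph.fromEdgeSet (F : Set (Sym2 (Pt n)))).Reachable (i, false) (i, true)

/-- The optimum cost of a feasible solution. -/
noncomputable def OPT (M : SFI n) : ℝ := sInf {x | ∃ F, M.Feasible F ∧ M.cost F = x}
end SFI

namespace SFI

variable {n : ℕ}

lemma dist_nn (M : SFI n) (x y : Pt n) : 0 ≤ M.dist x y := by
  have h := M.dist_triangle x y x
  rw [M.dist_self, M.dist_symm y x] at h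
  linarith

/-- Auxiliary walk predicate in the contracted metric. -/
inductive Walk (M : SFI n) (𝒞 : Set (Set (Pt n))) (C : Set (Pt n)) :
    Set (Pt n) → ℝ → Prop
  | nil (h : C ∈ 𝒞) : Walk M 𝒞 C C 0
  | step {C' : Set (Pt n)} {c : ℝ} (C'' : Set (Pt n)) (h : C'' ∈ 𝒞)
      (u v : Pt n) (hu : u ∈ C') (hv : v ∈ C'')
      (w : Walk M 𝒞 C C' c) : Walk M 𝒞 C C'' (c + M.dist u v)

lemma Walk.cast {M : SFI n} {𝒞 : Set (Set (Pt n))} {C C' : Set (Pt n)} {c c' : ℝ}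
    (w : Walk M 𝒞 C C' c) (h : c = c') : Walk M 𝒞 C C' c' := h ▸ w

lemma Walk.start_mem {M : SFI n} {𝒞 : Set (Set (Pt n))} {C C' : Set (Pt n)} {c : ℝ}
    (w : Walk M 𝒞 C C' c) : C ∈ 𝒞 := by
  induction w with
  | nil h => exact h
  | step _ _ _ _ _ _ _ ih => exact ih

lemma Walk.consFront {M : SFI n} {𝒞 : Set (Set (Pt n))} {C' C'' : Set (Pt n)} {c : ℝ}
    (C : Set (Pt n)) (hC : C ∈ 𝒞) (u v : Pt n) (hu : u ∈ C) (hv : v ∈ C')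
    (w : Walk M 𝒞 C' C'' c) : Walk M 𝒞 C C'' (M.dist u v + c) := by
  induction w with
  | nil h => exact (Walk.step _ h u v hu hv (Walk.nil hC)).cast (by ring)
  | step D hD a b ha hb w ih => exact (Walk.step D hD a b ha hb ih).cast (by ring)

lemma Walk.symm {M : SFI n} {𝒞 : Set (Set (Pt n))} {C C' : Set (Pt n)} {c : ℝ}
    (w : Walk M 𝒞 C C' c) : Walk M 𝒞 C' C c := by
  induction w with
  | nil h => exact Walk.nil h
  | step D hD a b ha hb w ih =>
    exact (Walk.consFront D hD b a hb ha ih).cast (by rw [M.dist_symm]; ring)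

lemma Walk.mem_pathSet {M : SFI n} {𝒞 : Set (Set (Pt n))} {C C' : Set (Pt n)} {c : ℝ}
    (w : Walk M 𝒞 C C' c) :
    ∃ (k : ℕ) (Q : Fin (k+1) → Set (Pt n)) (x y : Fin k → Pt n),
      (∀ j, Q j ∈ 𝒞) ∧ Q 0 = C ∧ Q (Fin.last k) = C' ∧
      (∀ j : Fin k, x j ∈ Q j.castSucc ∧ y j ∈ Q j.succ) ∧
      c = ∑ j, M.dist (x j) (y j) := by
  induction w with
  | nil h =>
    exact ⟨0, fun _ => C, Fin.elim0, Fin.elim0, fun _ => h, rfl, rfl,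
      fun j => j.elim0, by simp⟩
  | step C'' h u v hu hv w ih =>
    obtain ⟨k, Q, x, y, hQ, hQ0, hQl, hxy, hsum⟩ := ih
    refine ⟨k+1, Fin.snoc Q C'', Fin.snoc x u, Fin.snoc y v, ?_, ?_, ?_, ?_, ?_⟩
    · intro j
      induction j using Fin.lastCases with
      | last => rw [Fin.snoc_last]; exact h
      | cast j => rw [Fin.snoc_castSucc]; exact hQ j
    · have : ((0 : Fin (k+1)).castSucc) = (0 : Fin (k+2)) := rfl
      rw [← this, Fin.snoc_castSucc, hQ0]
    · rw [Fin.snoc_last]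
    · intro j
      induction j using Fin.lastCases with
      | last =>
        refine ⟨?_, ?_⟩
        · simp only [Fin.snoc_last, Fin.snoc_castSucc, hQl]
          exact hu
        · simp only [Fin.succ_last, Fin.snoc_last]
          exact hv
      | cast j =>
        refine ⟨?_, ?_⟩
        · simp only [Fin.snoc_castSucc]
          exact (hxy j).1
        · simp only [Fin.succ_castSucc, Fin.snoc_castSucc]
          exact (hxy j).2
    · rw [Fin.sum_univ_castSucc]
      simp only [Fin.snoc_castSucc, Fin.snoc_last]
      rw [hsum]

lemma pathSet_bddBelow (M : SFI n) (𝒞 : Set (Set (Pt n))) (C C' : Set (Pt n)) :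
    BddBelow {s | ∃ (k : ℕ) (Q : Fin (k+1) → Set (Pt n)) (x y : Fin k → Pt n),
      (∀ j, Q j ∈ 𝒞) ∧ Q 0 = C ∧ Q (Fin.last k) = C' ∧
      (∀ j : Fin k, x j ∈ Q j.castSucc ∧ y j ∈ Q j.succ) ∧
      s = ∑ j, M.dist (x j) (y j)} := by
  refine ⟨0, ?_⟩
  rintro s ⟨k, Q, x, y, -, -, -, -, rfl⟩
  exact Finset.sum_nonneg fun j _ => M.dist_nn _ _

lemma cDist_le_walk {M : SFI n} {𝒞 : Set (Set (Pt n))} {C C' : Set (Pt n)} {c : ℝ}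
    (w : Walk M 𝒞 C C' c) : M.cDist 𝒞 C C' ≤ c :=
  csInf_le (M.pathSet_bddBelow 𝒞 C C') w.mem_pathSet

lemma hRel_symm (M : SFI n) (𝒞 : Set (Set (Pt n))) (i : ℕ) :
    Symmetric (M.hRel 𝒞 i) := by
  rintro C₁ C₂ ⟨h1, h2, h3, h4, h5, h6, h7⟩
  exact ⟨h2, h1, h3.symm, h5, h4, h7, h6⟩

lemma rtg_mem {M : SFI n} {𝒞 : Set (Set (Pt n))} {i : ℕ} {A D : Set (Pt n)}
    (hA : A ∈ 𝒞) (hAa : M.Active i A)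
    (h : Relation.ReflTransGen (M.hRel 𝒞 i) A D) : D ∈ 𝒞 ∧ M.Active i D := by
  induction h with
  | refl => exact ⟨hA, hAa⟩
  | tail _ h _ => exact ⟨h.2.1, h.2.2.2.2.1⟩

lemma rtg_comp_eq {M : SFI n} {𝒞 : Set (Set (Pt n))} {i : ℕ} {A B : Set (Pt n)}
    (h : Relation.ReflTransGen (M.hRel 𝒞 i) A B) :
    {C' | Relation.ReflTransGen (M.hRel 𝒞 i) A C'}
      = {C' | Relation.ReflTransGen (M.hRel 𝒞 i) B C'} := by
  have hsym : ∀ {a b}, Relation.ReflTransGen (M.hRel 𝒞 i) a b → Relation.ReflTransGen (M.hRel 𝒞 i) b a :=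
    fun h => (@Relation.ReflTransGen.symmetric _ _ ⟨fun _ _ h' => M.hRel_symm 𝒞 i h'⟩).symm _ _ h
  ext D
  constructor
  · intro hD
    exact Relation.ReflTransGen.trans (hsym h) hD
  · intro hD
    exact Relation.ReflTransGen.trans h hD

lemma clusterings_nonempty (M : SFI n) :
    ∀ i : ℕ, ∀ C ∈ M.clusterings Set.univ i, C.Nonempty := by
  intro i
  induction i with
  | zero =>
    rintro C ⟨v, -, rfl⟩
    exact ⟨v, rfl⟩
  | succ i ih =>
    rintro C (⟨hC, -⟩ | ⟨A, hA, -, rfl⟩)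
    · exact ih C hC
    · obtain ⟨v, hv⟩ := ih A hA
      exact ⟨v, A, Relation.ReflTransGen.refl, hv⟩

lemma clusterings_disjoint (M : SFI n) :
    ∀ i : ℕ, ∀ C ∈ M.clusterings Set.univ i, ∀ D ∈ M.clusterings Set.univ i,
      C ≠ D → ∀ v, v ∈ C → v ∈ D → False := by
  intro i
  induction i with
  | zero =>
    rintro C ⟨a, -, rfl⟩ D ⟨b, -, rfl⟩ hne v hvC hvD
    rw [Set.mem_singleton_iff] at hvC hvD
    apply hne
    rw [← hvC, ← hvD]
  | succ i ih =>
    have hsym : ∀ {a b}, Relation.ReflTransGen (M.hRel (M.clusterings Set.univ i) i) a b → Relation.ReflTransGen (M.hRel (M.clusterings Set.univ i) i) b a :=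
    fun h => (@Relation.ReflTransGen.symmetric _ _ ⟨fun _ _ h' => M.hRel_symm (M.clusterings Set.univ i) i h'⟩).symm _ _ h
    rintro C hC D hD hne v hvC hvD
    rcases hC with ⟨hC, hCna⟩ | ⟨A, hA, hAa, rfl⟩
    · rcases hD with ⟨hD, -⟩ | ⟨B, hB, hBa, rfl⟩
      · exact ih C hC D hD hne v hvC hvD
      · obtain ⟨D', hD'comp, hvD'⟩ := hvD
        obtain ⟨hD'm, hD'a⟩ := rtg_mem hB hBa hD'comp
        have : C ≠ D' := fun h => hCna (h ▸ hD'a)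
        exact ih C hC D' hD'm this v hvC hvD'
    · rcases hD with ⟨hD, hDna⟩ | ⟨B, hB, hBa, rfl⟩
      · obtain ⟨C', hC'comp, hvC'⟩ := hvC
        obtain ⟨hC'm, hC'a⟩ := rtg_mem hA hAa hC'comp
        have : C' ≠ D := fun h => hDna (h ▸ hC'a)
        exact ih C' hC'm D hD this v hvC' hvD
      · obtain ⟨C', hC'comp, hvC'⟩ := hvC
        obtain ⟨D', hD'comp, hvD'⟩ := hvD
        obtain ⟨hC'm, hC'a⟩ := rtg_mem hA hAa hC'comp
        obtain ⟨hD'm, hD'a⟩ := rtg_mem hB hBa hD'comp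
        by_cases hCD : C' = D'
        · subst hCD
          have hAB : Relation.ReflTransGen (M.hRel (M.clusterings Set.univ i) i) A B :=
            Relation.ReflTransGen.trans hC'comp (hsym hD'comp)
          exact hne (by rw [rtg_comp_eq hAB])
        · exact ih C' hC'm D' hD'm hCD v hvC' hvD'

end SFI

namespace SFI

lemma base_case (M : SFI n) (C₁ C₂ : Set (Pt n)) (hne : C₁ ≠ C₂)
    (k : ℕ) (Q : Fin (k+1) → Set (Pt n)) (x y : Fin k → Pt n)
    (hQ : ∀ j, Q j ∈ M.clusterings Set.univ 0)
    (hQ0 : Q 0 = C₁) (hQl : Q (Fin.last k) = C₂)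
    (hxy : ∀ j : Fin k, x j ∈ Q j.castSucc ∧ y j ∈ Q j.succ) :
    (1:ℝ) ≤ ∑ j, M.dist (x j) (y j) := by
  have hQ' : ∀ j, ∃ v : Pt n, Q j = {v} := by
    intro j
    obtain ⟨v, -, hv⟩ := hQ j
    exact ⟨v, hv⟩
  choose w hw using hQ'
  have hx : ∀ j : Fin k, x j = w j.castSucc := by
    intro j
    have h := (hxy j).1
    rw [hw] at h
    exact h
  have hy : ∀ j : Fin k, y j = w j.succ := by
    intro j
    have h := (hxy j).2
    rw [hw] at h
    exact h
  set d : ℕ → ℝ := fun t => if h : t < k then M.dist (x ⟨t, h⟩) (y ⟨t, h⟩) else 0 with hd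
  have key : ∀ t, ∀ ht : t ≤ k,
      M.dist (w 0) (w ⟨t, Nat.lt_succ_of_le ht⟩) ≤ ∑ j ∈ Finset.range t, d j := by
    intro t
    induction t with
    | zero =>
      intro ht
      have e : (⟨0, Nat.lt_succ_of_le ht⟩ : Fin (k+1)) = 0 := Fin.ext (by simp)
      rw [e]
      simp [M.dist_self]
    | succ t ih =>
      intro ht
      have ht' : t ≤ k := Nat.le_of_succ_le ht
      have htk : t < k := ht
      have h3 := M.dist_triangle (w 0) (w ⟨t, Nat.lt_succ_of_le ht'⟩)
        (w ⟨t+1, Nat.lt_succ_of_le ht⟩)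
      have h6 := ih ht'
      have h7 : d t = M.dist (w ⟨t, Nat.lt_succ_of_le ht'⟩) (w ⟨t+1, Nat.lt_succ_of_le ht⟩) := by
        simp only [hd]
        rw [dif_pos htk, hx, hy]
        rfl
      rw [Finset.sum_range_succ]
      linarith
  have hsum : ∑ j ∈ Finset.range k, d j = ∑ j, M.dist (x j) (y j) := by
    rw [← Fin.sum_univ_eq_sum_range (fun t => d t) k]
    refine Finset.sum_congr rfl fun j _ => ?_
    simp only [hd]
    rw [dif_pos j.isLt]
  have hne' : w 0 ≠ w (Fin.last k) := by
    intro h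
    apply hne
    rw [← hQ0, ← hQl, hw, hw, h]
  have h1 := M.one_le_dist _ _ hne'
  have h2 := key k le_rfl
  rw [hsum] at h2
  have e2 : (⟨k, Nat.lt_succ_of_le le_rfl⟩ : Fin (k+1)) = Fin.last k := rfl
  rw [e2] at h2
  linarith

lemma step_case (M : SFI n) (i : ℕ) (C₁ C₂ : Set (Pt n)) (hne : C₁ ≠ C₂)
    (ha₁ : M.Active (i+1) C₁) (ha₂ : M.Active (i+1) C₂)
    (hC₁ : C₁ ∈ M.clusterings Set.univ (i+1)) (hC₂ : C₂ ∈ M.clusterings Set.univ (i+1))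
    (k : ℕ) (Q : Fin (k+1) → Set (Pt n)) (x y : Fin k → Pt n)
    (hQ : ∀ j, Q j ∈ M.clusterings Set.univ (i+1))
    (hQ0 : Q 0 = C₁) (hQl : Q (Fin.last k) = C₂)
    (hxy : ∀ j : Fin k, x j ∈ Q j.castSucc ∧ y j ∈ Q j.succ)
    (hs : ∑ j, M.dist (x j) (y j) < 2 ^ (i+1)) : False := by
  set 𝒟 := M.clusterings Set.univ i with h𝒟
  have hsym : ∀ {a b}, Relation.ReflTransGen (M.hRel 𝒟 i) a b → Relation.ReflTransGen (M.hRel 𝒟 i) b a :=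
    fun h => (@Relation.ReflTransGen.symmetric _ _ ⟨fun _ _ h' => M.hRel_symm 𝒟 i h'⟩).symm _ _ h
  rcases Nat.eq_zero_or_pos k with rfl | hk
  · apply hne
    rw [← hQ0, ← hQl]
    congr 1
  have ha₁' : M.Active i C₁ := Nat.le_of_succ_le ha₁
  have ha₂' : M.Active i C₂ := Nat.le_of_succ_le ha₂
  rcases hC₁ with ⟨-, hna⟩ | ⟨A₁, hA₁, hA₁a, hC₁eq⟩
  · exact hna ha₁'
  rcases hC₂ with ⟨-, hna⟩ | ⟨A₂, hA₂, hA₂a, hC₂eq⟩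
  · exact hna ha₂'
  set d : ℕ → ℝ := fun t => if h : t < k then M.dist (x ⟨t, h⟩) (y ⟨t, h⟩) else 0 with hd
  have hd_nn : ∀ t, 0 ≤ d t := by
    intro t
    simp only [hd]
    split
    · exact M.dist_nn _ _
    · exact le_refl 0
  have hpSk : ∑ j ∈ Finset.range k, d j = ∑ j, M.dist (x j) (y j) := by
    rw [← Fin.sum_univ_eq_sum_range (fun t => d t) k]
    refine Finset.sum_congr rfl fun j _ => ?_
    simp only [hd]
    rw [dif_pos j.isLt]
  have hpS_lt : ∀ t, t ≤ k → ∑ j ∈ Finset.range t, d j < 2 ^ (i+1) := by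
    intro t ht
    have h1 : ∑ j ∈ Finset.range t, d j ≤ ∑ j ∈ Finset.range k, d j :=
      Finset.sum_le_sum_of_subset_of_nonneg (Finset.range_subset_range.2 ht)
        (fun j _ _ => hd_nn j)
    rw [hpSk] at h1
    linarith
  have locate : ∀ (j : Fin (k+1)) (p : Pt n), p ∈ Q j → ∃ D, D ∈ 𝒟 ∧ p ∈ D := by
    intro j p hp
    rcases hQ j with ⟨hm, -⟩ | ⟨B, hB, hBa, hEq⟩
    · exact ⟨Q j, hm, hp⟩
    · rw [hEq] at hp
      obtain ⟨D, hD, hpD⟩ := hp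
      exact ⟨D, (rtg_mem hB hBa hD).1, hpD⟩
  have Inv : ∀ t, ∀ ht : t < k, ∃ R E c, R ∈ 𝒟 ∧ M.Active i R ∧
      Relation.ReflTransGen (M.hRel 𝒟 i) A₁ R ∧ E ∈ 𝒟 ∧ y ⟨t, ht⟩ ∈ E ∧
      M.Walk 𝒟 R E c ∧ c ≤ ∑ j ∈ Finset.range (t+1), d j := by
    intro t
    induction t with
    | zero =>
      intro ht
      have hx0 : x ⟨0, ht⟩ ∈ C₁ := by
        have h := (hxy ⟨0, ht⟩).1
        have e : (Fin.castSucc ⟨0, ht⟩ : Fin (k+1)) = 0 := Fin.ext (by simp)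
        rw [e, hQ0] at h
        exact h
      rw [hC₁eq] at hx0
      obtain ⟨F, hFc, hxF⟩ := hx0
      obtain ⟨hFm, hFa⟩ := rtg_mem hA₁ hA₁a hFc
      obtain ⟨E, hEm, hyE⟩ := locate _ _ (hxy ⟨0, ht⟩).2
      refine ⟨F, E, 0 + M.dist (x ⟨0, ht⟩) (y ⟨0, ht⟩), hFm, hFa, hFc, hEm, hyE,
        Walk.step E hEm _ _ hxF hyE (Walk.nil hFm), ?_⟩
      rw [Finset.sum_range_one]
      have h7 : d 0 = M.dist (x ⟨0, ht⟩) (y ⟨0, ht⟩) := by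
        simp only [hd]
        rw [dif_pos ht]
      rw [h7]
      linarith [M.dist_nn (x ⟨0, ht⟩) (y ⟨0, ht⟩)]
    | succ t ih =>
      intro ht
      have ht' : t < k := Nat.lt_of_succ_lt ht
      obtain ⟨R, E, c, hRm, hRa, hRc, hEm, hyE, hw, hc⟩ := ih ht'
      have hymid : y ⟨t, ht'⟩ ∈ Q (Fin.succ ⟨t, ht'⟩) := (hxy _).2
      have hxmid : x ⟨t+1, ht⟩ ∈ Q (Fin.succ ⟨t, ht'⟩) := by
        have h := (hxy ⟨t+1, ht⟩).1
        have e : (Fin.castSucc ⟨t+1, ht⟩ : Fin (k+1)) = Fin.succ ⟨t, ht'⟩ := Fin.ext (by simp)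
        rw [e] at h
        exact h
      obtain ⟨E', hE'm, hyE'⟩ := locate _ _ (hxy ⟨t+1, ht⟩).2
      have h7 : d (t+1) = M.dist (x ⟨t+1, ht⟩) (y ⟨t+1, ht⟩) := by
        simp only [hd]
        rw [dif_pos ht]
      rcases hQ (Fin.succ ⟨t, ht'⟩) with ⟨hm, -⟩ | ⟨B, hB, hBa, hEq⟩
      · -- kept cluster: E = Q jm
        have hEQ : E = Q (Fin.succ ⟨t, ht'⟩) := by
          by_contra hne'
          exact M.clusterings_disjoint i E hEm _ hm hne' _ hyE hymid
        refine ⟨R, E', c + M.dist (x ⟨t+1, ht⟩) (y ⟨t+1, ht⟩), hRm, hRa, hRc, hE'm, hyE',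
          Walk.step E' hE'm _ _ (by rw [hEQ]; exact hxmid) hyE' hw, ?_⟩
        rw [Finset.sum_range_succ, h7]
        linarith
      · -- merged cluster
        have hymid' := hymid
        rw [hEq] at hymid'
        obtain ⟨G, hGc, hyG⟩ := hymid'
        obtain ⟨hGm, hGa⟩ := rtg_mem hB hBa hGc
        have hEG : E = G := by
          by_contra hne'
          exact M.clusterings_disjoint i E hEm G hGm hne' _ hyE hyG
        have hEa : M.Active i E := by rw [hEG]; exact hGa
        have hBE : Relation.ReflTransGen (M.hRel 𝒟 i) B E := by rw [hEG]; exact hGc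
        have hclt : c < 2 ^ (i+1) := lt_of_le_of_lt hc (hpS_lt (t+1) (Nat.le_of_lt ht))
        have hRTGE : Relation.ReflTransGen (M.hRel 𝒟 i) A₁ E := by
          by_cases hRE : R = E
          · rw [← hRE]; exact hRc
          · exact hRc.tail ⟨hRm, hEm, hRE, hRa, hEa,
              lt_of_le_of_lt (cDist_le_walk hw) hclt,
              lt_of_le_of_lt (cDist_le_walk hw.symm) hclt⟩
        have hxmid' := hxmid
        rw [hEq] at hxmid'
        obtain ⟨F, hFc, hxF⟩ := hxmid'
        obtain ⟨hFm, hFa⟩ := rtg_mem hB hBa hFc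
        have hA₁F : Relation.ReflTransGen (M.hRel 𝒟 i) A₁ F :=
          (hRTGE.trans (hsym hBE)).trans hFc
        refine ⟨F, E', 0 + M.dist (x ⟨t+1, ht⟩) (y ⟨t+1, ht⟩), hFm, hFa, hA₁F, hE'm, hyE',
          Walk.step E' hE'm _ _ hxF hyE' (Walk.nil hFm), ?_⟩
        rw [Finset.sum_range_succ, h7]
        have := Finset.sum_nonneg (fun j (_ : j ∈ Finset.range (t+1)) => hd_nn j)
        linarith
  have hk1 : k - 1 < k := by omega
  obtain ⟨R, E, c, hRm, hRa, hRc, hEm, hyE, hw, hc⟩ := Inv (k-1) hk1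
  have hyl : y ⟨k-1, hk1⟩ ∈ C₂ := by
    have h := (hxy ⟨k-1, hk1⟩).2
    have e : (Fin.succ ⟨k-1, hk1⟩ : Fin (k+1)) = Fin.last k := Fin.ext (by simp; omega)
    rw [e, hQl] at h
    exact h
  rw [hC₂eq] at hyl
  obtain ⟨G, hGc, hyG⟩ := hyl
  obtain ⟨hGm, hGa⟩ := rtg_mem hA₂ hA₂a hGc
  have hEG : E = G := by
    by_contra hne'
    exact M.clusterings_disjoint i E hEm G hGm hne' _ hyE hyG
  have hEa : M.Active i E := by rw [hEG]; exact hGa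
  have hA₂E : Relation.ReflTransGen (M.hRel 𝒟 i) A₂ E := by rw [hEG]; exact hGc
  have hclt : c < 2 ^ (i+1) := by
    have hkk : k - 1 + 1 = k := by omega
    rw [hkk] at hc
    exact lt_of_le_of_lt hc (hpS_lt k le_rfl)
  have hRTGE : Relation.ReflTransGen (M.hRel 𝒟 i) A₁ E := by
    by_cases hRE : R = E
    · rw [← hRE]; exact hRc
    · exact hRc.tail ⟨hRm, hEm, hRE, hRa, hEa,
        lt_of_le_of_lt (cDist_le_walk hw) hclt,
        lt_of_le_of_lt (cDist_le_walk hw.symm) hclt⟩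
  have hAB : Relation.ReflTransGen (M.hRel 𝒟 i) A₁ A₂ := hRTGE.trans (hsym hA₂E)
  apply hne
  rw [hC₁eq, hC₂eq, rtg_comp_eq hAB]


end SFI

/-- For every `0 ≤ i ≤ L+1` and any two distinct `i`-active clusters
`C₁, C₂ ∈ 𝒞_i` of the clustering procedure run on a Steiner forest instance,
`dist_{M/𝒞_i}(C₁, C₂) ≥ 2^i`. -/
theorem stmt2 (n : ℕ) (M : SFI n) (i : ℕ) (hi : i ≤ M.maxLevel + 1)
    (C₁ C₂ : Set (SFI.Pt n))
    (hC₁ : C₁ ∈ M.clusterings Set.univ i) (hC₂ : C₂ ∈ M.clusterings Set.univ i)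
    (hne : C₁ ≠ C₂) (ha₁ : M.Active i C₁) (ha₂ : M.Active i C₂) :
    (2 : ℝ) ^ i ≤ M.cDist (M.clusterings Set.univ i) C₁ C₂ := by
  obtain ⟨u, hu⟩ := M.clusterings_nonempty i C₁ hC₁
  obtain ⟨v, hv⟩ := M.clusterings_nonempty i C₂ hC₂
  have hwalk : SFI.Walk M (M.clusterings Set.univ i) C₁ C₂ (0 + M.dist u v) :=
    SFI.Walk.step C₂ hC₂ u v hu hv (SFI.Walk.nil hC₁)
  rw [SFI.cDist]
  refine le_csInf ⟨_, hwalk.mem_pathSet⟩ ?_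
  rintro s ⟨k, Q, x, y, hQ, hQ0, hQl, hxy, rfl⟩
  by_contra hlt
  push_neg at hlt
  cases i with
  | zero =>
    have h1 := M.base_case C₁ C₂ hne k Q x y hQ hQ0 hQl hxy
    norm_num at hlt
    linarith
  | succ i =>
    exact M.step_case i C₁ C₂ hne ha₁ ha₂ hC₁ hC₂ k Q x y hQ hQ0 hQl hxy hlt
end

section
/- Let (M, D) be a Steiner forest instance and run the clustering procedure on it, producing clusterings 𝒞_0, …, 𝒞_{L+1}. Then for every demand pair (u, v) ∈ D there is a cluster C ∈ 𝒞_{L+1} with u ∈ C and v ∈ C. -/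
open Finset

namespace SFI

variable {n : ℕ} (M : SFI n)

lemma dist_nonneg' (x y : Pt n) : 0 ≤ M.dist x y := by
  have h := M.dist_triangle x y x
  rw [M.dist_self, M.dist_symm y x] at h
  linarith

lemma exists_supset_step (𝒞 : Set (Set (Pt n))) (i : ℕ) (C : Set (Pt n)) (hC : C ∈ 𝒞) :
    ∃ C' ∈ M.step 𝒞 i, C ⊆ C' := by
  by_cases h : M.Active i C
  · exact ⟨⋃₀ {C' | Relation.ReflTransGen (M.hRel 𝒞 i) C C'}, Or.inr ⟨C, hC, h, rfl⟩,
      Set.subset_sUnion_of_mem Relation.ReflTransGen.refl⟩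
  · exact ⟨C, Or.inl ⟨hC, h⟩, subset_rfl⟩

lemma exists_supset (S : Set (Pt n)) {i j : ℕ} (hij : i ≤ j) (C : Set (Pt n))
    (hC : C ∈ M.clusterings S i) : ∃ C' ∈ M.clusterings S j, C ⊆ C' := by
  induction j with
  | zero => obtain rfl : i = 0 := Nat.le_zero.mp hij; exact ⟨C, hC, subset_rfl⟩
  | succ j ih =>
    rcases eq_or_lt_of_le hij with rfl | h
    · exact ⟨C, hC, subset_rfl⟩
    · obtain ⟨C'', hC'', hsub⟩ := ih (Nat.lt_succ_iff.mp h)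
      obtain ⟨C', hC', hsub'⟩ := M.exists_supset_step (M.clusterings S j) j C'' hC''
      exact ⟨C', hC', hsub.trans hsub'⟩

lemma exists_mem_clusterings (i : ℕ) (v : Pt n) :
    ∃ C ∈ M.clusterings Set.univ i, v ∈ C := by
  induction i with
  | zero => exact ⟨{v}, ⟨v, Set.mem_univ v, rfl⟩, rfl⟩
  | succ i ih =>
    obtain ⟨C, hC, hv⟩ := ih
    obtain ⟨C', hC', hsub⟩ := M.exists_supset_step (M.clusterings Set.univ i) i C hC
    exact ⟨C', hC', hsub hv⟩

lemma level_le_clLevel {v : Pt n} {C : Set (Pt n)} (hv : v ∈ C) :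
    M.level v ≤ M.clLevel C :=
  le_csSup (Set.toFinite _).bddAbove ⟨v, hv, rfl⟩

lemma dist_mate_lt (v : Pt n) : M.dist v (mate v) < 2 ^ (M.level v + 1) := by
  have hne : v ≠ mate v := by
    simp [mate, Prod.ext_iff]
  have h1 : (1 : ℝ) ≤ M.dist v (mate v) := M.one_le_dist _ _ hne
  have hpos : (0 : ℝ) < M.dist v (mate v) := lt_of_lt_of_le one_pos h1
  have hlog : Real.logb 2 (M.dist v (mate v)) ≤ (M.level v : ℝ) := Nat.le_ceil _
  have hle : M.dist v (mate v) ≤ 2 ^ M.level v := by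
    calc M.dist v (mate v) = (2 : ℝ) ^ (Real.logb 2 (M.dist v (mate v))) :=
          (Real.rpow_logb two_pos (by norm_num) hpos).symm
      _ ≤ (2 : ℝ) ^ ((M.level v : ℝ)) :=
          Real.rpow_le_rpow_of_exponent_le one_le_two hlog
      _ = 2 ^ M.level v := Real.rpow_natCast 2 _
  have : (2 : ℝ) ^ M.level v < 2 ^ (M.level v + 1) :=
    pow_lt_pow_right₀ one_lt_two (Nat.lt_succ_self _)
  linarith

lemma cDist_le (𝒞 : Set (Set (Pt n))) (C C' : Set (Pt n)) (hC : C ∈ 𝒞) (hC' : C' ∈ 𝒞)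
    {x y : Pt n} (hx : x ∈ C) (hy : y ∈ C') : M.cDist 𝒞 C C' ≤ M.dist x y := by
  apply csInf_le
  · refine ⟨0, ?_⟩
    rintro s ⟨k, Q, xs, ys, _, _, _, _, rfl⟩
    exact Finset.sum_nonneg fun j _ => M.dist_nonneg' _ _
  · refine ⟨1, ![C, C'], ![x], ![y], ?_, by simp, by simp [Fin.last], ?_, by simp⟩
    · intro j; fin_cases j <;> simpa
    · intro j
      fin_cases j
      constructor
      · simpa using hx
      · simpa using hy

end SFI

/-- After running the clustering procedure on a Steiner forest instance,
every demand pair `(u, v)` is contained in a single cluster of the top clustering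
`𝒞_{L+1}`. -/
theorem stmt3 (n : ℕ) (M : SFI n) (i : Fin n) :
    ∃ C ∈ M.clusterings Set.univ (M.maxLevel + 1),
      ((i, false) : SFI.Pt n) ∈ C ∧ ((i, true) : SFI.Pt n) ∈ C := by
  set u : SFI.Pt n := (i, false)
  set v : SFI.Pt n := (i, true)
  have hmu : SFI.mate u = v := rfl
  have hmv : SFI.mate v = u := rfl
  set ℓ := M.level u with hℓ
  have hlv : M.level v = ℓ := by
    simp only [SFI.level, hmu, hmv, hℓ, M.dist_symm v u]
  have hℓL : ℓ ≤ M.maxLevel :=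
    le_csSup (Set.finite_range _).bddAbove (Set.mem_range_self u)
  obtain ⟨Cu, hCu, hu⟩ := M.exists_mem_clusterings ℓ u
  obtain ⟨Cv, hCv, hv⟩ := M.exists_mem_clusterings ℓ v
  have hAu : M.Active ℓ Cu := le_trans (le_of_eq hℓ) (M.level_le_clLevel hu)
  have hAv : M.Active ℓ Cv := le_trans (le_of_eq hlv.symm) (M.level_le_clLevel hv)
  have hd : M.dist u v < 2 ^ (ℓ + 1) := by
    have := M.dist_mate_lt u; rwa [hmu] at this
  have hd' : M.dist v u < 2 ^ (ℓ + 1) := by rwa [M.dist_symm v u]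
  by_cases hEq : Cu = Cv
  · obtain ⟨C, hC, hsub⟩ := M.exists_supset Set.univ (le_trans hℓL (Nat.le_succ _)) Cu hCu
    exact ⟨C, hC, hsub hu, hsub (hEq ▸ hv)⟩
  · have hrel : M.hRel (M.clusterings Set.univ ℓ) ℓ Cu Cv :=
      ⟨hCu, hCv, hEq, hAu, hAv,
        lt_of_le_of_lt (M.cDist_le _ Cu Cv hCu hCv hu hv) hd,
        lt_of_le_of_lt (M.cDist_le _ Cv Cu hCv hCu hv hu) hd'⟩
    set D : Set (SFI.Pt n) :=
      ⋃₀ {C' | Relation.ReflTransGen (M.hRel (M.clusterings Set.univ ℓ) ℓ) Cu C'}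
    have hD : D ∈ M.clusterings Set.univ (ℓ + 1) := Or.inr ⟨Cu, hCu, hAu, rfl⟩
    have huD : u ∈ D := Set.subset_sUnion_of_mem Relation.ReflTransGen.refl hu
    have hvD : v ∈ D :=
      Set.subset_sUnion_of_mem (Relation.ReflTransGen.single hrel) hv
    obtain ⟨C, hC, hsub⟩ :=
      M.exists_supset Set.univ (Nat.succ_le_succ hℓL) D hD
    exact ⟨C, hC, hsub huD, hsub hvD⟩
end

section
/- Let (M, D) be a Steiner forest instance and let (M', D') be obtained from it by removing one demand pair (with M' the submetric induced on the remaining terminals). Let (𝒞'_i) and (𝒞_i) be the clustering hierarchies produced by the clustering procedure on (M', D') and on (M, D) respectively, extended beyond their top levels by setting 𝒞'_j := 𝒞'_{L'+1} for j > L'+1 and 𝒞_j := 𝒞_{L+1} for j > L+1. Then 𝒞'_i ⪯ 𝒞_i for every i ≥ 0. -/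
open Finset

section Aux

open SFI Relation

variable {n : ℕ}

lemma aux_dist_nonneg (M : SFI n) (x y : SFI.Pt n) : 0 ≤ M.dist x y := by
  nlinarith [M.dist_triangle x y x, M.dist_self x, M.dist_symm x y]

lemma aux_clLevel_mono (M : SFI n) {C D : Set (SFI.Pt n)} (h : C ⊆ D) :
    M.clLevel C ≤ M.clLevel D := by
  rcases C.eq_empty_or_nonempty with rfl | hne
  · simp [SFI.clLevel]
  · exact csSup_le_csSup ((D.toFinite.image _).bddAbove) (hne.image _) (Set.image_mono h)

lemma aux_active_mono (M : SFI n) {i : ℕ} {C D : Set (SFI.Pt n)} (h : C ⊆ D)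
    (hC : M.Active i C) : M.Active i D := le_trans hC (aux_clLevel_mono M h)

lemma aux_nonempty (M : SFI n) (S : Set (SFI.Pt n)) (i : ℕ) :
    ∀ C ∈ M.clusterings S i, C.Nonempty := by
  induction i with
  | zero => rintro C ⟨v, hv, rfl⟩; exact ⟨v, rfl⟩
  | succ i ih =>
    rintro C (⟨hC, _⟩ | ⟨C₀, hC₀, hact, rfl⟩)
    · exact ih C hC
    · obtain ⟨x, hx⟩ := ih C₀ hC₀
      exact ⟨x, Set.mem_sUnion.2 ⟨C₀, Relation.ReflTransGen.refl, hx⟩⟩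

lemma aux_cDist_lt (M : SFI n) {𝒞 𝒞' : Set (Set (SFI.Pt n))}
    (f : Set (SFI.Pt n) → Set (SFI.Pt n))
    (hf : ∀ C ∈ 𝒞', f C ∈ 𝒞 ∧ C ⊆ f C)
    {C₁ C₂ : Set (SFI.Pt n)} (hne : C₁ ≠ C₂)
    (h₁ : C₁ ∈ 𝒞') (h₂ : C₂ ∈ 𝒞')
    (hn₁ : C₁.Nonempty) (hn₂ : C₂.Nonempty) {b : ℝ}
    (h : M.cDist 𝒞' C₁ C₂ < b) : M.cDist 𝒞 (f C₁) (f C₂) < b := by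
  obtain ⟨a, ha⟩ := hn₁
  obtain ⟨a', ha'⟩ := hn₂
  have hSne : {s | ∃ (k : ℕ) (Q : Fin (k+1) → Set (SFI.Pt n)) (x y : Fin k → SFI.Pt n),
      (∀ j, Q j ∈ 𝒞') ∧ Q 0 = C₁ ∧ Q (Fin.last k) = C₂ ∧
      (∀ j : Fin k, x j ∈ Q j.castSucc ∧ y j ∈ Q j.succ) ∧
      s = ∑ j, M.dist (x j) (y j)}.Nonempty := by
    refine ⟨M.dist a a', 1, (fun t => if t = 0 then C₁ else C₂), (fun _ => a), (fun _ => a'),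
      ?_, ?_, ?_, ?_, ?_⟩
    · intro t
      by_cases ht : t = 0 <;> simp [ht, h₁, h₂]
    · simp
    · simp [show (Fin.last 1 : Fin 2) ≠ 0 by decide]
    · intro t
      have ht : t = 0 := Subsingleton.elim _ _
      subst ht
      constructor
      · simpa using ha
      · simpa [show ((0 : Fin 1).succ : Fin 2) ≠ 0 by decide] using ha'
    · simp
  obtain ⟨s, hs, hsb⟩ := exists_lt_of_csInf_lt hSne h
  obtain ⟨k, Q, x, y, hQmem, hQ0, hQl, hxy, rfl⟩ := hs
  rcases k with _ | k
  · exact absurd (hQ0.symm.trans hQl) hne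
  have hlastne : (Fin.last (k+1) : Fin (k+2)) ≠ 0 := by
    simp [Fin.ext_iff]
  refine lt_of_le_of_lt (csInf_le ?_ ?_) hsb
  · refine ⟨0, ?_⟩
    rintro s ⟨k', Q', x', y', _, _, _, _, rfl⟩
    exact Finset.sum_nonneg fun j _ => aux_dist_nonneg M _ _
  · refine ⟨k+1,
      (fun t => if t = 0 then f C₁ else if t = Fin.last (k+1) then f C₂ else f (Q t)),
      x, y, ?_, ?_, ?_, ?_, rfl⟩
    · intro t
      by_cases ht : t = 0
      · simpa [ht] using (hf C₁ h₁).1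
      by_cases ht' : t = Fin.last (k+1)
      · simpa [ht, ht'] using (hf C₂ h₂).1
      · simpa [ht, ht'] using (hf (Q t) (hQmem t)).1
    · simp
    · simp [hlastne]
    · intro t
      obtain ⟨hx, hy⟩ := hxy t
      refine ⟨?_, ?_⟩
      · show x t ∈ if t.castSucc = 0 then f C₁ else
            if t.castSucc = Fin.last (k+1) then f C₂ else f (Q t.castSucc)
        by_cases ht : t.castSucc = 0
        · rw [if_pos ht]; rw [ht, hQ0] at hx; exact (hf C₁ h₁).2 hx
        by_cases ht' : t.castSucc = Fin.last (k+1)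
        · rw [if_neg ht, if_pos ht']; rw [ht', hQl] at hx; exact (hf C₂ h₂).2 hx
        · rw [if_neg ht, if_neg ht']; exact (hf _ (hQmem t.castSucc)).2 hx
      · show y t ∈ if t.succ = 0 then f C₁ else
            if t.succ = Fin.last (k+1) then f C₂ else f (Q t.succ)
        rw [if_neg (Fin.succ_ne_zero t)]
        by_cases ht' : t.succ = Fin.last (k+1)
        · rw [if_pos ht']; rw [ht', hQl] at hy; exact (hf C₂ h₂).2 hy
        · rw [if_neg ht']; exact (hf _ (hQmem t.succ)).2 hy

lemma aux_rtg_mem (M : SFI n) {𝒞' : Set (Set (SFI.Pt n))} {i : ℕ}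
    {C C'' : Set (SFI.Pt n)} (hC : C ∈ 𝒞')
    (h : Relation.ReflTransGen (M.hRel 𝒞' i) C C'') : C'' ∈ 𝒞' := by
  induction h with
  | refl => exact hC
  | tail _ hrel _ => exact hrel.2.1

lemma aux_rtg_lift (M : SFI n) {𝒞 𝒞' : Set (Set (SFI.Pt n))} {i : ℕ}
    (f : Set (SFI.Pt n) → Set (SFI.Pt n))
    (hf : ∀ C ∈ 𝒞', f C ∈ 𝒞 ∧ C ⊆ f C)
    (hnon : ∀ C ∈ 𝒞', C.Nonempty)
    {C C'' : Set (SFI.Pt n)}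
    (h : Relation.ReflTransGen (M.hRel 𝒞' i) C C'') :
    Relation.ReflTransGen (M.hRel 𝒞 i) (f C) (f C'') := by
  induction h with
  | refl => exact Relation.ReflTransGen.refl
  | @tail b c _ hrel ih =>
    obtain ⟨hb, hc, hbc, hab, hac, d1, d2⟩ := hrel
    by_cases hfe : f b = f c
    · exact hfe ▸ ih
    · refine ih.tail ⟨(hf _ hb).1, (hf _ hc).1, hfe,
        aux_active_mono M (hf _ hb).2 hab, aux_active_mono M (hf _ hc).2 hac,
        aux_cDist_lt M f hf hbc hb hc (hnon _ hb) (hnon _ hc) d1,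
        aux_cDist_lt M f hf hbc.symm hc hb (hnon _ hc) (hnon _ hb) d2⟩

end Aux

/-- Let `(M', D')` be obtained from `(M, D)` by removing the demand pair
with index `j` (its terminal set is `{v | v.1 ≠ j}`, with the induced submetric). Then the
clustering hierarchies of the two instances (extended constantly beyond their top levels,
as is automatic in this formalization) satisfy `𝒞'_i ⪯ 𝒞_i` for every `i ≥ 0`. -/
theorem stmt5 (n : ℕ) (M : SFI n) (j : Fin n) (i : ℕ) :
    ∀ C ∈ M.clusterings {v : SFI.Pt n | v.1 ≠ j} i,
      ∃ D ∈ M.clusterings Set.univ i, C ⊆ D := by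
  induction i with
  | zero =>
    rintro C ⟨v, hv, rfl⟩
    exact ⟨{v}, ⟨v, Set.mem_univ v, rfl⟩, subset_refl _⟩
  | succ i ih =>
    classical
    set 𝒞' := M.clusterings {v : SFI.Pt n | v.1 ≠ j} i with h𝒞'
    set 𝒞 := M.clusterings Set.univ i with h𝒞
    let f : Set (SFI.Pt n) → Set (SFI.Pt n) :=
      fun C => if h : C ∈ 𝒞' then (ih C h).choose else C
    have hf : ∀ C ∈ 𝒞', f C ∈ 𝒞 ∧ C ⊆ f C := by
      intro C hC
      simp only [f, dif_pos hC]
      exact ⟨(ih C hC).choose_spec.1, (ih C hC).choose_spec.2⟩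
    have hnon : ∀ C ∈ 𝒞', C.Nonempty := aux_nonempty M _ i
    rintro C (⟨hC, hinact⟩ | ⟨C₀, hC₀, hact, rfl⟩)
    · by_cases hA : M.Active i (f C)
      · refine ⟨⋃₀ {C' | Relation.ReflTransGen (M.hRel 𝒞 i) (f C) C'},
          Or.inr ⟨f C, (hf C hC).1, hA, rfl⟩, ?_⟩
        exact (hf C hC).2.trans
          (Set.subset_sUnion_of_mem (Relation.ReflTransGen.refl))
      · exact ⟨f C, Or.inl ⟨(hf C hC).1, hA⟩, (hf C hC).2⟩
    · refine ⟨⋃₀ {C' | Relation.ReflTransGen (M.hRel 𝒞 i) (f C₀) C'},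
        Or.inr ⟨f C₀, (hf C₀ hC₀).1, aux_active_mono M (hf C₀ hC₀).2 hact, rfl⟩, ?_⟩
      rintro x ⟨C'', hC'', hx⟩
      have hmem : C'' ∈ 𝒞' := aux_rtg_mem M hC₀ hC''
      exact Set.mem_sUnion.2 ⟨f C'', aux_rtg_lift M f hf hnon hC'',
        (hf C'' hmem).2 hx⟩
end

section
/- Let (M, D) be a Steiner forest instance and let (M', D') be obtained from it by removing one demand pair, with clustering hierarchies (𝒞'_i, H'_i) and (𝒞_i, H_i) from the clustering procedure on the two instances. Fix a level i, and let (C_1, C_2) be a virtual edge of H'_i such that C_1 and C_2 are contained in two distinct clusters D_1, D_2 of 𝒞_i. Then D_1 and D_2 are i-active clusters of 𝒞_i and (D_1, D_2) is a virtual edge of H_i. -/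
open Finset

namespace SFI

variable {n : ℕ} (M : SFI n)

lemma active_mono {i : ℕ} {C D : Set (Pt n)} (hC : C.Nonempty) (hsub : C ⊆ D)
    (h : M.Active i C) : M.Active i D := by
  refine le_trans h (csSup_le_csSup ?_ (hC.image _) (Set.image_mono hsub))
  exact (((Set.finite_range M.level)).subset (Set.image_subset_range _ _)).bddAbove

lemma hRel_symm_s6 {𝒞 : Set (Set (Pt n))} {i : ℕ} {C C' : Set (Pt n)}
    (h : M.hRel 𝒞 i C C') : M.hRel 𝒞 i C' C := by
  obtain ⟨h1, h2, h3, h4, h5, h6, h7⟩ := h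
  exact ⟨h2, h1, h3.symm, h5, h4, h7, h6⟩

lemma rtg_symm' {α : Type*} {r : α → α → Prop} (hr : ∀ a b, r a b → r b a) {a b : α}
    (h : Relation.ReflTransGen r a b) : Relation.ReflTransGen r b a := by
  induction h with
  | refl => exact .refl
  | tail _ h ih => exact Relation.ReflTransGen.head (hr _ _ h) ih

lemma rtg_mem_s6 {𝒞 : Set (Set (Pt n))} {i : ℕ} {C C' : Set (Pt n)}
    (h : Relation.ReflTransGen (M.hRel 𝒞 i) C C') (hC : C ∈ 𝒞) : C' ∈ 𝒞 := by
  induction h with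
  | refl => exact hC
  | tail _ h _ => exact h.2.1

lemma rtg_active {𝒞 : Set (Set (Pt n))} {i : ℕ} {C C' : Set (Pt n)}
    (h : Relation.ReflTransGen (M.hRel 𝒞 i) C C') (hC : M.Active i C) : M.Active i C' := by
  induction h with
  | refl => exact hC
  | tail _ h _ => exact h.2.2.2.2.1

lemma clusterings_nonempty_s6 {S : Set (Pt n)} {i : ℕ} {C : Set (Pt n)}
    (h : C ∈ M.clusterings S i) : C.Nonempty := by
  induction i generalizing C with
  | zero => obtain ⟨v, _, rfl⟩ := h; exact ⟨v, rfl⟩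
  | succ i ih =>
    rcases h with ⟨hC, _⟩ | ⟨C₀, hC₀, _, rfl⟩
    · exact ih hC
    · obtain ⟨v, hv⟩ := ih hC₀
      exact ⟨v, Set.mem_sUnion.2 ⟨C₀, Relation.ReflTransGen.refl, hv⟩⟩

lemma clusterings_disjoint_s6 {S : Set (Pt n)} {i : ℕ} {C D : Set (Pt n)}
    (hC : C ∈ M.clusterings S i) (hD : D ∈ M.clusterings S i)
    (hne : (C ∩ D).Nonempty) : C = D := by
  induction i generalizing C D with
  | zero =>
    obtain ⟨v, _, rfl⟩ := hC
    obtain ⟨w, _, rfl⟩ := hD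
    obtain ⟨x, hx1, hx2⟩ := hne
    simp only [Set.mem_singleton_iff] at hx1 hx2
    rw [hx1] at hx2; rw [hx2]
  | succ i ih =>
    obtain ⟨x, hxC, hxD⟩ := hne
    rcases hC with ⟨hC, hCin⟩ | ⟨A, hA, hAact, rfl⟩ <;>
      rcases hD with ⟨hD, hDin⟩ | ⟨B, hB, hBact, rfl⟩
    · exact ih hC hD ⟨x, hxC, hxD⟩
    · obtain ⟨C', hC', hxC'⟩ := hxD
      have := ih hC (M.rtg_mem_s6 hC' hB) ⟨x, hxC, hxC'⟩
      exact absurd (this ▸ M.rtg_active hC' hBact) hCin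
    · obtain ⟨C', hC', hxC'⟩ := hxC
      have := ih hD (M.rtg_mem_s6 hC' hA) ⟨x, hxD, hxC'⟩
      exact absurd (this ▸ M.rtg_active hC' hAact) hDin
    · obtain ⟨C', hC', hxC'⟩ := hxC
      obtain ⟨C'', hC'', hxC''⟩ := hxD
      have hCC : C' = C'' :=
        ih (M.rtg_mem_s6 hC' hA) (M.rtg_mem_s6 hC'' hB) ⟨x, hxC', hxC''⟩
      have hAB : Relation.ReflTransGen (M.hRel (M.clusterings S i) i) A B :=
        hC'.trans (rtg_symm' (fun _ _ h => M.hRel_symm_s6 h) (hCC ▸ hC''))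
      have hBA := rtg_symm' (fun _ _ h => M.hRel_symm_s6 h) hAB
      have hset : {C' | Relation.ReflTransGen (M.hRel (M.clusterings S i) i) A C'} =
          {C' | Relation.ReflTransGen (M.hRel (M.clusterings S i) i) B C'} :=
        Set.ext fun E => ⟨fun h => hBA.trans h, fun h => hAB.trans h⟩
      rw [hset]

lemma cDist_mono (𝒞 𝒟 : Set (Set (Pt n)))
    (hdisj : ∀ D D' : Set (Pt n), D ∈ 𝒟 → D' ∈ 𝒟 → (D ∩ D').Nonempty → D = D')
    (href : ∀ C ∈ 𝒞, ∃ D ∈ 𝒟, C ⊆ D)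
    {C₁ C₂ D₁ D₂ : Set (Pt n)} (hC₁ : C₁ ∈ 𝒞) (hC₂ : C₂ ∈ 𝒞)
    (hne₁ : C₁.Nonempty) (hne₂ : C₂.Nonempty)
    (hD₁ : D₁ ∈ 𝒟) (hD₂ : D₂ ∈ 𝒟) (h₁ : C₁ ⊆ D₁) (h₂ : C₂ ⊆ D₂) :
    M.cDist 𝒟 D₁ D₂ ≤ M.cDist 𝒞 C₁ C₂ := by
  obtain ⟨p, hp⟩ := hne₁
  obtain ⟨q, hq⟩ := hne₂
  apply csInf_le_csInf
  · refine ⟨0, ?_⟩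
    rintro s ⟨k, Q, x, y, _, _, _, _, rfl⟩
    exact Finset.sum_nonneg fun j _ => M.dist_nonneg' _ _
  · refine ⟨M.dist p q, 1, ![C₁, C₂], ![p], ![q], ?_, rfl, rfl, ?_, ?_⟩
    · intro j
      fin_cases j <;> simpa
    · intro j
      fin_cases j
      exact ⟨hp, hq⟩
    · simp
  · rintro s ⟨k, Q, x, y, hQ, hQ0, hQl, hxy, rfl⟩
    choose R hR hsub using fun j => href (Q j) (hQ j)
    have hR0 : R 0 = D₁ := by
      apply hdisj _ _ (hR 0) hD₁
      exact ⟨p, hsub 0 (hQ0 ▸ hp), h₁ hp⟩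
    have hRl : R (Fin.last k) = D₂ := by
      apply hdisj _ _ (hR _) hD₂
      exact ⟨q, hsub _ (hQl ▸ hq), h₂ hq⟩
    exact ⟨k, R, x, y, hR, hR0, hRl,
      fun j => ⟨hsub _ (hxy j).1, hsub _ (hxy j).2⟩, rfl⟩

lemma edge_lift {S : Set (Pt n)} {i : ℕ}
    (href : ∀ C ∈ M.clusterings S i, ∃ D ∈ M.clusterings Set.univ i, C ⊆ D)
    {C₁ C₂ D₁ D₂ : Set (Pt n)}
    (hE : M.hRel (M.clusterings S i) i C₁ C₂)
    (hD₁ : D₁ ∈ M.clusterings Set.univ i) (hD₂ : D₂ ∈ M.clusterings Set.univ i)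
    (h₁ : C₁ ⊆ D₁) (h₂ : C₂ ⊆ D₂) (hne : D₁ ≠ D₂) :
    M.hRel (M.clusterings Set.univ i) i D₁ D₂ := by
  obtain ⟨hc1, hc2, hcc, ha1, ha2, hd1, hd2⟩ := hE
  have hn1 := M.clusterings_nonempty_s6 hc1
  have hn2 := M.clusterings_nonempty_s6 hc2
  have hdisj : ∀ D D' : Set (Pt n), D ∈ M.clusterings Set.univ i →
      D' ∈ M.clusterings Set.univ i → (D ∩ D').Nonempty → D = D' :=
    fun _ _ hD hD' h => M.clusterings_disjoint_s6 hD hD' h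
  exact ⟨hD₁, hD₂, hne, M.active_mono hn1 h₁ ha1, M.active_mono hn2 h₂ ha2,
    lt_of_le_of_lt (M.cDist_mono _ _ hdisj href hc1 hc2 hn1 hn2 hD₁ hD₂ h₁ h₂) hd1,
    lt_of_le_of_lt (M.cDist_mono _ _ hdisj href hc2 hc1 hn2 hn1 hD₂ hD₁ h₂ h₁) hd2⟩

lemma clusterings_refine (S : Set (Pt n)) :
    ∀ i, ∀ C ∈ M.clusterings S i, ∃ D ∈ M.clusterings Set.univ i, C ⊆ D := by
  intro i
  induction i with
  | zero =>
    rintro C ⟨v, _, rfl⟩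
    exact ⟨{v}, ⟨v, trivial, rfl⟩, subset_rfl⟩
  | succ i ih =>
    rintro C (⟨hC, _⟩ | ⟨A, hA, hAact, rfl⟩)
    · obtain ⟨D, hD, hsub⟩ := ih C hC
      by_cases hact : M.Active i D
      · exact ⟨⋃₀ {C' | Relation.ReflTransGen (M.hRel (M.clusterings Set.univ i) i) D C'},
          Or.inr ⟨D, hD, hact, rfl⟩,
          hsub.trans (Set.subset_sUnion_of_mem Relation.ReflTransGen.refl)⟩
      · exact ⟨D, Or.inl ⟨hD, hact⟩, hsub⟩
    · obtain ⟨DA, hDA, hsubA⟩ := ih A hA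
      have hDAact : M.Active i DA := M.active_mono (M.clusterings_nonempty_s6 hA) hsubA hAact
      refine ⟨⋃₀ {D' | Relation.ReflTransGen (M.hRel (M.clusterings Set.univ i) i) DA D'},
        Or.inr ⟨DA, hDA, hDAact, rfl⟩, ?_⟩
      intro x hx
      obtain ⟨C', hC', hxC'⟩ := hx
      have key : ∀ C', Relation.ReflTransGen (M.hRel (M.clusterings S i) i) A C' →
          ∃ D', Relation.ReflTransGen (M.hRel (M.clusterings Set.univ i) i) DA D' ∧ C' ⊆ D' := by
        intro C' h
        induction h with
        | refl => exact ⟨DA, .refl, hsubA⟩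
        | tail hab hbc ih2 =>
          obtain ⟨D', hD', hsub'⟩ := ih2
          obtain ⟨D'', hD''mem, hsub''⟩ := ih _ hbc.2.1
          by_cases hDD : D' = D''
          · exact ⟨D', hD', hDD ▸ hsub''⟩
          · have hD'mem : D' ∈ M.clusterings Set.univ i := M.rtg_mem_s6 hD' hDA
            have hlift := M.edge_lift ih hbc hD'mem hD''mem hsub' hsub'' hDD
            exact ⟨D'', hD'.tail hlift, hsub''⟩
      obtain ⟨D', hD', hsub'⟩ := key C' hC'
      exact Set.mem_sUnion.2 ⟨D', hD', hsub' hxC'⟩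

end SFI

/-- Let `(M', D')` be obtained from `(M, D)` by removing the demand pair
with index `j`. Fix a level `i`, and let `(C₁, C₂)` be a virtual edge of `H'_i` such that
`C₁, C₂` are contained in two distinct clusters `D₁, D₂` of `𝒞_i`. Then `D₁` and `D₂` are
`i`-active clusters of `𝒞_i` and `(D₁, D₂)` is a virtual edge of `H_i`. -/
theorem stmt6 (n : ℕ) (M : SFI n) (j : Fin n) (i : ℕ)
    (C₁ C₂ D₁ D₂ : Set (SFI.Pt n))
    (hE : (M.virtG {v : SFI.Pt n | v.1 ≠ j} i).Adj C₁ C₂)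
    (hD₁ : D₁ ∈ M.clusterings Set.univ i) (hD₂ : D₂ ∈ M.clusterings Set.univ i)
    (h₁ : C₁ ⊆ D₁) (h₂ : C₂ ⊆ D₂) (hne : D₁ ≠ D₂) :
    M.Active i D₁ ∧ M.Active i D₂ ∧ (M.virtG Set.univ i).Adj D₁ D₂ := by
  have href := fun C hC => M.clusterings_refine {v : SFI.Pt n | v.1 ≠ j} i C hC
  have h := M.edge_lift href hE hD₁ hD₂ h₁ h₂ hne
  exact ⟨h.2.2.2.1, h.2.2.2.2.1, h⟩
end

section
/- Let (V, d) be a metric space, let r ≥ 0 be a real number, and let X ⊆ V be a finite set whose points have pairwise distances at least 2r (i.e., d(x, x') ≥ 2r for all distinct x, x' ∈ X). Then for all u, v ∈ V: Σ_{x ∈ X} | min(r, d(x, u)) − min(r, d(x, v)) | ≤ d(u, v). -/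
lemma min_lip (c a b : ℝ) : |min c a - min c b| ≤ |a - b| := by
  simpa using abs_min_sub_min_le_max c a c b

/-- Let `(V, d)` be a metric space, `r ≥ 0`, and let `X` be a finite set
of points with pairwise distances at least `2r`. Then for all `u, v`,
`Σ_{x ∈ X} |min(r, d(x,u)) − min(r, d(x,v))| ≤ d(u,v)`.
(This is the feasibility of the dual solution obtained by growing balls of radius `r`
around the points of `X`.) -/
theorem stmt10 {V : Type*} [MetricSpace V] (r : ℝ) (hr : 0 ≤ r)
    (X : Finset V) (hX : ∀ x ∈ X, ∀ y ∈ X, x ≠ y → 2 * r ≤ dist x y)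
    (u v : V) :
    ∑ x ∈ X, |min r (dist x u) - min r (dist x v)| ≤ dist u v := by
  set f : V → ℝ := fun x => |min r (dist x u) - min r (dist x v)| with hf
  -- uniqueness of near points
  have uniq : ∀ w : V, ∀ x ∈ X, ∀ y ∈ X, dist x w < r → dist y w < r → x = y := by
    intro w x hx y hy h1 h2
    by_contra hne
    have h3 := hX x hx y hy hne
    have h4 : dist x y ≤ dist x w + dist w y := dist_triangle x w y
    rw [dist_comm w y] at h4
    linarith
  have fz : ∀ x : V, r ≤ dist x u → r ≤ dist x v → f x = 0 := by
    intro x h1 h2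
    simp [hf, min_eq_left h1, min_eq_left h2]
  have fD : ∀ x : V, f x ≤ dist u v := by
    intro x
    have h1 : |min r (dist x u) - min r (dist x v)| ≤ |dist x u - dist x v| :=
      min_lip r _ _
    have h2 : |dist x u - dist x v| ≤ dist u v := by
      rw [dist_comm x u, dist_comm x v]
      exact abs_dist_sub_le u v x
    exact h1.trans h2
  by_cases hu : ∃ x ∈ X, dist x u < r
  · obtain ⟨x1, hx1X, hx1⟩ := hu
    by_cases hv : ∃ x ∈ X, dist x v < r
    · obtain ⟨x2, hx2X, hx2⟩ := hv
      by_cases he : x1 = x2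
      · subst he
        have : ∑ x ∈ X, f x = f x1 := by
          apply Finset.sum_eq_single_of_mem x1 hx1X
          intro b hb hne
          apply fz
          · by_contra h; push_neg at h
            exact hne (uniq u b hb x1 hx1X h hx1)
          · by_contra h; push_neg at h
            exact hne (uniq v b hb x1 hx2X h hx2)
        rw [this]; exact fD x1
      · have hcross1 : r ≤ dist x1 v := by
          by_contra h; push_neg at h
          exact he (uniq v x1 hx1X x2 hx2X h hx2)
        have hcross2 : r ≤ dist x2 u := by
          by_contra h; push_neg at h
          exact he (uniq u x2 hx2X x1 hx1X h hx1).symm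
        have hsum : ∑ x ∈ X, f x = f x1 + f x2 := by
          apply Finset.sum_eq_add_of_mem x1 x2 hx1X hx2X he
          intro c hc ⟨hc1, hc2⟩
          apply fz
          · by_contra h; push_neg at h
            exact hc1 (uniq u c hc x1 hx1X h hx1)
          · by_contra h; push_neg at h
            exact hc2 (uniq v c hc x2 hx2X h hx2)
        have hf1 : f x1 = r - dist x1 u := by
          rw [hf]
          simp only [min_eq_right hx1.le, min_eq_left hcross1]
          rw [abs_of_nonpos (by linarith)]
          ring
        have hf2 : f x2 = r - dist x2 v := by
          rw [hf]
          simp only [min_eq_left hcross2, min_eq_right hx2.le]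
          rw [abs_of_nonneg (by linarith)]
        have htri : dist x1 x2 ≤ dist x1 u + dist u v + dist v x2 := by
          calc dist x1 x2 ≤ dist x1 u + dist u x2 := dist_triangle x1 u x2
            _ ≤ dist x1 u + (dist u v + dist v x2) := by
                linarith [dist_triangle u v x2]
            _ = dist x1 u + dist u v + dist v x2 := by ring
        have h2r := hX x1 hx1X x2 hx2X he
        rw [hsum, hf1, hf2, dist_comm v x2] at *
        linarith
    · push_neg at hv
      have : ∑ x ∈ X, f x = f x1 := by
        apply Finset.sum_eq_single_of_mem x1 hx1X
        intro b hb hne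
        apply fz
        · by_contra h; push_neg at h
          exact hne (uniq u b hb x1 hx1X h hx1)
        · exact hv b hb
      rw [this]; exact fD x1
  · push_neg at hu
    by_cases hv : ∃ x ∈ X, dist x v < r
    · obtain ⟨x2, hx2X, hx2⟩ := hv
      have : ∑ x ∈ X, f x = f x2 := by
        apply Finset.sum_eq_single_of_mem x2 hx2X
        intro b hb hne
        apply fz
        · exact hu b hb
        · by_contra h; push_neg at h
          exact hne (uniq v b hb x2 hx2X h hx2)
      rw [this]; exact fD x2
    · push_neg at hv
      have : ∑ x ∈ X, f x = 0 :=
        Finset.sum_eq_zero fun x hx => fz x (hu x hx) (hv x hx)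
      rw [this]; exact dist_nonneg
end
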